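/- arXiv:1104.3919 — 6 statements merged into one kernel-verified Lean document; each statement's English description precedes it below -/
import Mathlib

section
/- Let G be an interval graph on vertex set V whose right endpoints r(v) are pairwise distinct, let m = min_{v ∈ V} r(v), and let C1 = {v ∈ V : l(v) ≤ m}. Then there exists a triangle packing P of G of maximum cardinality such that the set U of vertices of C1 not covered by any triangle of P satisfies: |U| ≤ 2, and U is an initial segment of C1 under the ordering by right endpoints (that is, if v ∈ U and u ∈ C1 with r(u) < r(v), then u ∈ U). -/
/-!
Among the maximum triangle packings choose one, `P`, maximising the total right endpoint of the
covered vertices. The uncovered vertices of the clique `C1` form a clique, so three of them would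
give a triangle extending `P`; hence there are at most two. If `v ∈ C1` is uncovered while some
`u ∈ C1` with `r u < r v` lies in a triangle `T` of `P`, then `v` is adjacent to the other two
vertices of `T` (their intervals meet `[l u, r u]`, which ends before `r v`, and start before
`m ≤ r v`), so replacing `u` by `v` in `T` gives a maximum packing of larger weight.
-/

/-- A triangle in a simple graph: a set of three pairwise adjacent vertices. -/
def IsTriangle {V : Type*} (G : SimpleGraph V) (T : Finset V) : Prop :=
  T.card = 3 ∧ (T : Set V).Pairwise G.Adj

/-- A triangle packing: a collection of pairwise vertex-disjoint triangles. -/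
def IsTrianglePacking {V : Type*} (G : SimpleGraph V) (P : Finset (Finset V)) : Prop :=
  (∀ T ∈ P, IsTriangle G T) ∧
    (P : Set (Finset V)).Pairwise fun S T => Disjoint S T

open Finset

section

variable {V : Type*} {G : SimpleGraph V}

theorem IsTriangle.exchange [DecidableEq V] {T : Finset V} (hT : IsTriangle G T) {u v : V}
    (hu : u ∈ T) (hv : v ∉ T) (hadj : ∀ x ∈ T, x ≠ u → G.Adj v x) :
    IsTriangle G (insert v (T.erase u)) := by
  have hvT : v ∉ T.erase u := fun h => hv (mem_of_mem_erase h)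
  refine ⟨by rw [card_insert_of_notMem hvT, card_erase_of_mem hu, hT.1], ?_⟩
  rw [coe_insert, Set.pairwise_insert]
  refine ⟨hT.2.mono (by simp), fun x hx _ => ?_⟩
  have hxv : G.Adj v x := hadj x (mem_of_mem_erase hx) (ne_of_mem_erase hx)
  exact ⟨hxv, hxv.symm⟩

namespace IsTrianglePacking

variable {P Q : Finset (Finset V)}

theorem empty : IsTrianglePacking G ∅ := by
  simp [IsTrianglePacking]

theorem subset (hP : IsTrianglePacking G P) (hQP : Q ⊆ P) : IsTrianglePacking G Q :=
  ⟨fun T hT => hP.1 T (hQP hT), hP.2.mono hQP⟩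

theorem insert_of_disjoint [DecidableEq V] (hP : IsTrianglePacking G P) {T : Finset V}
    (hT : IsTriangle G T) (hdisj : ∀ S ∈ P, Disjoint T S) : IsTrianglePacking G (insert T P) := by
  refine ⟨fun S hS => ?_, ?_⟩
  · rcases mem_insert.mp hS with rfl | hS
    exacts [hT, hP.1 S hS]
  · rw [coe_insert]
    exact hP.2.insert fun S hS _ => ⟨hdisj S hS, (hdisj S hS).symm⟩

theorem card_insert_of_disjoint [DecidableEq V] {T : Finset V} (hT : IsTriangle G T)
    (hdisj : ∀ S ∈ P, Disjoint T S) : (insert T P).card = P.card + 1 := by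
  refine card_insert_of_notMem fun hTP => ?_
  have hne : T.Nonempty := card_pos.mp (by rw [hT.1]; norm_num)
  exact hne.ne_empty (disjoint_self.mp (hdisj T hTP))

theorem ncard_le_two_of_isClique (hP : IsTrianglePacking G P)
    (hmax : ∀ Q, IsTrianglePacking G Q → Q.card ≤ P.card) {s : Set V} (hs : G.IsClique s)
    (hunc : ∀ v ∈ s, ∀ T ∈ P, v ∉ T) : s.ncard ≤ 2 := by
  classical
  by_contra! h
  obtain ⟨t, hts, ht⟩ := Set.exists_subset_card_eq (show 3 ≤ s.ncard by omega)
  obtain ⟨x, y, z, hxy, hxz, hyz, rfl⟩ := Set.ncard_eq_three.mp ht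
  have hT : IsTriangle G {x, y, z} :=
    ⟨card_eq_three.mpr ⟨x, y, z, hxy, hxz, hyz, rfl⟩, by simpa using hs.subset hts⟩
  have hdisj : ∀ S ∈ P, Disjoint ({x, y, z} : Finset V) S := fun S hS =>
    disjoint_left.mpr fun a ha => hunc a (hts (by simpa using ha)) S hS
  have := hmax _ (hP.insert_of_disjoint hT hdisj)
  rw [card_insert_of_disjoint hT hdisj] at this
  omega

end IsTrianglePacking

def packingWeight (f : V → ℝ) (P : Finset (Finset V)) : ℝ :=
  ∑ T ∈ P, ∑ x ∈ T, f x

theorem IsTrianglePacking.exists_exchange [DecidableEq V] {P : Finset (Finset V)}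
    (hP : IsTrianglePacking G P) {T : Finset V} (hT : T ∈ P) {u v : V} (hu : u ∈ T)
    (hv : ∀ S ∈ P, v ∉ S) (hadj : ∀ x ∈ T, x ≠ u → G.Adj v x) (f : V → ℝ) :
    ∃ Q, IsTrianglePacking G Q ∧ Q.card = P.card ∧
      packingWeight f Q = packingWeight f P - f u + f v := by
  have hvT : v ∉ T.erase u := fun h => hv T hT (mem_of_mem_erase h)
  have hT' : IsTriangle G (insert v (T.erase u)) := (hP.1 T hT).exchange hu (hv T hT) hadj
  have hdisj : ∀ S ∈ P.erase T, Disjoint (insert v (T.erase u)) S := fun S hS =>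
    disjoint_insert_left.mpr ⟨hv S (mem_of_mem_erase hS),
      (hP.2 hT (mem_of_mem_erase hS) (ne_of_mem_erase hS).symm).mono_left (erase_subset u T)⟩
  refine ⟨_, (hP.subset (erase_subset T P)).insert_of_disjoint hT' hdisj, ?_, ?_⟩
  · rw [IsTrianglePacking.card_insert_of_disjoint hT' hdisj, card_erase_of_mem hT]
    have := card_pos.mpr ⟨T, hT⟩
    omega
  · have hT'P : insert v (T.erase u) ∉ P.erase T := fun h =>
      hv _ (mem_of_mem_erase h) (mem_insert_self _ _)
    rw [packingWeight, packingWeight, sum_insert hT'P, sum_insert hvT, sum_erase_eq_sub hu,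
      sum_erase_eq_sub hT]
    ring

theorem exists_maximum_trianglePacking_maximizing [Finite V] (G : SimpleGraph V)
    (f : Finset (Finset V) → ℝ) :
    ∃ P, IsTrianglePacking G P ∧ (∀ Q, IsTrianglePacking G Q → Q.card ≤ P.card) ∧
      ∀ Q, IsTrianglePacking G Q → Q.card = P.card → f Q ≤ f P := by
  classical
  have := Fintype.ofFinite V
  obtain ⟨P₀, hP₀, hmax₀⟩ := exists_max_image ({P | IsTrianglePacking G P} : Finset _) card
    ⟨∅, by simpa using IsTrianglePacking.empty⟩
  obtain ⟨P, hP, hbest⟩ := exists_max_image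
    ({P | IsTrianglePacking G P ∧ P.card = P₀.card} : Finset _) f ⟨P₀, by simpa using hP₀⟩
  simp only [mem_filter, mem_univ, true_and] at hP₀ hmax₀ hP hbest
  exact ⟨P, hP.1, fun Q hQ => hP.2 ▸ hmax₀ Q hQ,
    fun Q hQ hQP => hbest Q ⟨hQ, hQP.trans hP.2⟩⟩

section IntervalGraph

variable {l r : V → ℝ} {w : V}

theorem isClique_setOf_le_min (hadj : ∀ u v, G.Adj u v ↔ u ≠ v ∧ l u ≤ r v ∧ l v ≤ r u)
    (hw : ∀ v, r w ≤ r v) : G.IsClique {v | l v ≤ r w} := fun x hx y hy hxy =>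
  (hadj x y).mpr ⟨hxy, hx.trans (hw y), hy.trans (hw x)⟩

theorem adj_of_adj_of_lt (hadj : ∀ u v, G.Adj u v ↔ u ≠ v ∧ l u ≤ r v ∧ l v ≤ r u)
    (hw : ∀ v, r w ≤ r v) {u v x : V} (hv : l v ≤ r w) (hux : G.Adj u x) (huv : r u < r v)
    (hxv : x ≠ v) : G.Adj v x := by
  obtain ⟨-, -, hxu⟩ := (hadj u x).mp hux
  exact (hadj v x).mpr ⟨hxv.symm, hv.trans (hw x), hxu.trans huv.le⟩

end IntervalGraph

end

theorem stmt1_general {V : Type*} [Fintype V] (G : SimpleGraph V) (l r : V → ℝ)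
    (hadj : ∀ u v, G.Adj u v ↔ u ≠ v ∧ l u ≤ r v ∧ l v ≤ r u)
    (w : V) (hw : ∀ v, r w ≤ r v) :
    ∃ P : Finset (Finset V), IsTrianglePacking G P ∧
      (∀ Q : Finset (Finset V), IsTrianglePacking G Q → Q.card ≤ P.card) ∧
      {v | l v ≤ r w ∧ ∀ T ∈ P, v ∉ T}.ncard ≤ 2 ∧
      (∀ v, (l v ≤ r w ∧ ∀ T ∈ P, v ∉ T) →
        ∀ u, l u ≤ r w → r u < r v → (l u ≤ r w ∧ ∀ T ∈ P, u ∉ T)) := by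
  classical
  obtain ⟨P, hP, hmax, hbest⟩ := exists_maximum_trianglePacking_maximizing G (packingWeight r)
  refine ⟨P, hP, hmax, ?_, fun v hv u hu huv => ⟨hu, fun T hT huT => ?_⟩⟩
  · exact hP.ncard_le_two_of_isClique hmax
      ((isClique_setOf_le_min hadj hw).subset fun v hv => hv.1) fun v hv => hv.2
  · have hadjv : ∀ x ∈ T, x ≠ u → G.Adj v x := fun x hx hxu =>
      adj_of_adj_of_lt hadj hw hv.1 ((hP.1 T hT).2 huT hx hxu.symm) huv
        (ne_of_mem_of_not_mem hx (hv.2 T hT))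
    obtain ⟨Q, hQ, hQcard, hQweight⟩ := hP.exists_exchange hT huT hv.2 hadjv r
    linarith [hbest Q hQ hQcard]

/-- Let `G` be an interval graph with pairwise distinct right endpoints,
`m = r w` the minimum right endpoint and `C1 = {v | l v ≤ m}` the first maximal clique.
There is a maximum triangle packing `P` such that the set `U` of vertices of `C1` not
covered by `P` has at most 2 elements and is an initial segment of `C1` in the ordering
by right endpoints. -/
theorem stmt1 {V : Type*} [Fintype V] (G : SimpleGraph V) (l r : V → ℝ)
    (hlr : ∀ v, l v ≤ r v)
    (hadj : ∀ u v, G.Adj u v ↔ u ≠ v ∧ l u ≤ r v ∧ l v ≤ r u)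
    (hinj : Function.Injective r)
    (w : V) (hw : ∀ v, r w ≤ r v) :
    ∃ P : Finset (Finset V), IsTrianglePacking G P ∧
      (∀ Q : Finset (Finset V), IsTrianglePacking G Q → Q.card ≤ P.card) ∧
      {v | l v ≤ r w ∧ ∀ T ∈ P, v ∉ T}.ncard ≤ 2 ∧
      (∀ v, (l v ≤ r w ∧ ∀ T ∈ P, v ∉ T) →
        ∀ u, l u ≤ r w → r u < r v → (l u ≤ r w ∧ ∀ T ∈ P, u ∉ T)) :=
  stmt1_general G l r hadj w hw
end

section
/- Let G be an interval graph on vertex set V whose right endpoints r(v) are pairwise distinct, let m = min_{v ∈ V} r(v), and let C1 = {v ∈ V : l(v) ≤ m}. Suppose |C1| ≥ 3 and let α, β, γ be the three vertices of C1 with the smallest right endpoints, with r(α) < r(β) < r(γ). If P is a triangle packing of G such that α is covered by a triangle of P, then there exists a triangle packing P′ of G with |P′| = |P| such that {α, β, γ} is a triangle of P′. -/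
/-! The triangle `T ∈ P` through `α` lies in `C1 = {v | l v ≤ r w}`: its vertices meet `α`, and
`r α = r w`. The clique `C1` has `α, β, γ` as its vertices with the smallest right endpoints, so
for `u ∈ T \ {α, β, γ}` and `v ∈ {α, β, γ} \ T` every neighbour of `v` outside `T` also meets
`u`. Swapping `u` and `v` in all triangles of `P` therefore yields a packing of the same size, in
which the triangle `T` has moved one vertex closer to `{α, β, γ}`. -/

open Finset

namespace IsTrianglePacking

variable {V : Type*} [DecidableEq V] {G : SimpleGraph V} {P : Finset (Finset V)}

theorem image_perm (hP : IsTrianglePacking G P) (σ : Equiv.Perm V)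
    (hσ : ∀ S ∈ P, ∀ a ∈ S, ∀ b ∈ S, G.Adj a b → G.Adj (σ a) (σ b)) :
    IsTrianglePacking G (P.image (image σ)) := by
  refine ⟨?_, ?_⟩
  · intro _ hS'
    obtain ⟨S, hS, rfl⟩ := mem_image.1 hS'
    refine ⟨by rw [card_image_of_injective _ σ.injective, (hP.1 S hS).1], ?_⟩
    rw [coe_image]
    rintro _ ⟨a, ha, rfl⟩ _ ⟨b, hb, rfl⟩ hab
    exact hσ S hS a ha b hb ((hP.1 S hS).2 ha hb (ne_of_apply_ne σ hab))
  · intro _ hS₁' _ hS₂' hne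
    obtain ⟨S₁, hS₁, rfl⟩ := mem_image.1 hS₁'
    obtain ⟨S₂, hS₂, rfl⟩ := mem_image.1 hS₂'
    exact (disjoint_image σ.injective).2 (hP.2 hS₁ hS₂ (ne_of_apply_ne _ hne))

theorem exists_insert_erase_mem (hP : IsTrianglePacking G P) {T : Finset V} (hT : T ∈ P) {u v : V}
    (hu : u ∈ T) (hv : v ∉ T) (hvT : ∀ x ∈ T, x ≠ u → G.Adj v x)
    (hvu : ∀ z ∉ T, G.Adj v z → G.Adj u z) :
    ∃ P' : Finset (Finset V), IsTrianglePacking G P' ∧ P'.card = P.card ∧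
      insert v (T.erase u) ∈ P' := by
  set σ := Equiv.swap u v
  have hσT : T.image σ = insert v (T.erase u) := by
    ext x
    simp only [mem_image, mem_insert, mem_erase, σ, Equiv.swap_apply_def]
    grind
  refine ⟨P.image (image σ), hP.image_perm σ ?_,
    card_image_of_injective _ (image_injective σ.injective), hσT ▸ mem_image_of_mem _ hT⟩
  intro S hS a ha b hb hab
  have hne := hab.ne
  by_cases hST : S = T
  · subst hST
    have hav : a ≠ v := ne_of_mem_of_not_mem ha hv
    have hbv : b ≠ v := ne_of_mem_of_not_mem hb hv
    simp only [σ, Equiv.swap_apply_def, if_neg hav, if_neg hbv]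
    split_ifs with hau hbu hbu
    · exact absurd (hau.trans hbu.symm) hne
    · exact hvT b hb hbu
    · exact (hvT a ha hau).symm
    · exact hab
  · have hdisj := hP.2 hS hT hST
    have haT : a ∉ T := disjoint_left.1 hdisj ha
    have hbT : b ∉ T := disjoint_left.1 hdisj hb
    have hau : a ≠ u := fun h => haT (h ▸ hu)
    have hbu : b ≠ u := fun h => hbT (h ▸ hu)
    simp only [σ, Equiv.swap_apply_def, if_neg hau, if_neg hbu]
    split_ifs with hav hbv hbv
    · exact absurd (hav.trans hbv.symm) hne
    · exact hvu b hbT (hav ▸ hab)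
    · exact (hvu a haT (hbv ▸ hab.symm)).symm
    · exact hab

end IsTrianglePacking

section IntervalGraph

variable {V : Type*} {G : SimpleGraph V} {l r : V → ℝ} {m : ℝ}

theorem adj_of_left_le (hadj : ∀ u v, G.Adj u v ↔ u ≠ v ∧ l u ≤ r v ∧ l v ≤ r u)
    (hm : ∀ v, m ≤ r v) {u v : V} (huv : u ≠ v) (hu : l u ≤ m) (hv : l v ≤ m) : G.Adj u v :=
  (hadj u v).2 ⟨huv, hu.trans (hm v), hv.trans (hm u)⟩

theorem adj_of_adj_of_right_le (hadj : ∀ u v, G.Adj u v ↔ u ≠ v ∧ l u ≤ r v ∧ l v ≤ r u)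
    (hm : ∀ v, m ≤ r v) {u v z : V} (hu : l u ≤ m) (hvu : r v ≤ r u) (hzu : z ≠ u)
    (hvz : G.Adj v z) : G.Adj u z :=
  (hadj u z).2 ⟨hzu.symm, hu.trans (hm z), ((hadj v z).1 hvz).2.2.trans hvu⟩

theorem exists_trianglePacking_mem_of_forall_lt [DecidableEq V]
    (hadj : ∀ u v, G.Adj u v ↔ u ≠ v ∧ l u ≤ r v ∧ l v ≤ r u) (hm : ∀ v, m ≤ r v)
    {K : Finset V} (hKcard : K.card = 3) (hK : ∀ v ∈ K, l v ≤ m)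
    (hKlt : ∀ u, l u ≤ m → u ∉ K → ∀ v ∈ K, r v < r u)
    {P : Finset (Finset V)} (hP : IsTrianglePacking G P) {T : Finset V} (hT : T ∈ P)
    (hTm : ∀ u ∈ T, l u ≤ m) :
    ∃ P' : Finset (Finset V), IsTrianglePacking G P' ∧ P'.card = P.card ∧ K ∈ P' := by
  induction hn : (T \ K).card generalizing P T with
  | zero =>
    have hTK : T = K := eq_of_subset_of_card_le (sdiff_eq_empty_iff_subset.1 (card_eq_zero.1 hn))
      (by rw [hKcard, (hP.1 T hT).1])
    exact ⟨P, hP, rfl, hTK ▸ hT⟩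
  | succ n ih =>
    obtain ⟨u, hu⟩ : (T \ K).Nonempty := card_pos.1 (by omega)
    obtain ⟨huT, huK⟩ := mem_sdiff.1 hu
    obtain ⟨v, hvK, hvT⟩ : ∃ v ∈ K, v ∉ T := by
      by_contra! hKT
      have hKT : K = T := eq_of_subset_of_card_le hKT (by rw [hKcard, (hP.1 T hT).1])
      simp [hKT] at hn
    obtain ⟨P₁, hP₁, hcard, hT₁⟩ := hP.exists_insert_erase_mem hT huT hvT
      (fun x hx _ => adj_of_left_le hadj hm (ne_of_mem_of_not_mem hx hvT).symm (hK v hvK)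
        (hTm x hx))
      (fun z hz => adj_of_adj_of_right_le hadj hm (hTm u huT) (hKlt u (hTm u huT) huK v hvK).le
        (ne_of_mem_of_not_mem huT hz).symm)
    rw [← hcard]
    refine ih hP₁ hT₁ ?_ ?_
    · exact (forall_mem_insert _ _ _).2 ⟨hK v hvK, fun x hx => hTm x (mem_of_mem_erase hx)⟩
    · rw [insert_sdiff_of_mem _ hvK, erase_sdiff_comm, card_erase_of_mem hu, hn,
        Nat.add_sub_cancel]

end IntervalGraph

theorem stmt2_general {V : Type*} [DecidableEq V] (G : SimpleGraph V) (l r : V → ℝ)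
    (hlr : ∀ v, l v ≤ r v)
    (hadj : ∀ u v, G.Adj u v ↔ u ≠ v ∧ l u ≤ r v ∧ l v ≤ r u)
    (w : V) (hw : ∀ v, r w ≤ r v)
    (α β γ : V) (hβ : l β ≤ r w) (hγ : l γ ≤ r w)
    (hαβ : r α < r β) (hβγ : r β < r γ)
    (hsmall : ∀ v, l v ≤ r w → v ≠ α → v ≠ β → v ≠ γ → r γ < r v)
    (P : Finset (Finset V)) (hP : IsTrianglePacking G P)
    (hcov : ∃ T ∈ P, α ∈ T) :
    ∃ P' : Finset (Finset V), IsTrianglePacking G P' ∧ P'.card = P.card ∧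
      ({α, β, γ} : Finset V) ∈ P' := by
  obtain ⟨T, hT, hαT⟩ := hcov
  have hwα : w = α := by
    by_contra hwα
    have := hsmall w (hlr w) hwα (fun h => by linarith [hw α, h ▸ hαβ])
      (fun h => by linarith [hw α, h ▸ hβγ])
    linarith [hw α]
  subst hwα
  have hTm : ∀ u ∈ T, l u ≤ r w := fun u hu => by
    obtain rfl | huw := eq_or_ne u w
    · exact hlr u
    · exact ((hadj w u).1 ((hP.1 T hT).2 hαT hu huw.symm)).2.2
  refine exists_trianglePacking_mem_of_forall_lt hadj hw ?_ ?_ ?_ hP hT hTm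
  · exact card_eq_three.2 ⟨w, β, γ, ne_of_apply_ne r hαβ.ne, ne_of_apply_ne r (hαβ.trans hβγ).ne,
      ne_of_apply_ne r hβγ.ne, rfl⟩
  · simpa using ⟨hlr w, hβ, hγ⟩
  · intro u hu huK v hv
    simp only [mem_insert, mem_singleton, not_or] at huK hv
    have := hsmall u hu huK.1 huK.2.1 huK.2.2
    rcases hv with rfl | rfl | rfl <;> linarith

/-- Let `G` be an interval graph with pairwise distinct right endpoints,
`m = r w` the minimum right endpoint, `C1 = {v | l v ≤ m}`, and let `α, β, γ` be the
three vertices of `C1` with the smallest right endpoints (in this order). If `P` is a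
triangle packing covering `α`, then there is a triangle packing `P'` of the same
cardinality containing the triangle `{α, β, γ}`. -/
theorem stmt2 {V : Type*} [Fintype V] [DecidableEq V] (G : SimpleGraph V) (l r : V → ℝ)
    (hlr : ∀ v, l v ≤ r v)
    (hadj : ∀ u v, G.Adj u v ↔ u ≠ v ∧ l u ≤ r v ∧ l v ≤ r u)
    (hinj : Function.Injective r)
    (w : V) (hw : ∀ v, r w ≤ r v)
    (α β γ : V) (hα : l α ≤ r w) (hβ : l β ≤ r w) (hγ : l γ ≤ r w)
    (hαβ : r α < r β) (hβγ : r β < r γ)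
    (hsmall : ∀ v, l v ≤ r w → v ≠ α → v ≠ β → v ≠ γ → r γ < r v)
    (P : Finset (Finset V)) (hP : IsTrianglePacking G P)
    (hcov : ∃ T ∈ P, α ∈ T) :
    ∃ P' : Finset (Finset V), IsTrianglePacking G P' ∧ P'.card = P.card ∧
      ({α, β, γ} : Finset V) ∈ P' :=
  stmt2_general G l r hlr hadj w hw α β γ hβ hγ hαβ hβγ hsmall P hP hcov
end

section
/- Let G be an interval graph on vertex set V whose right endpoints r(v) are pairwise distinct, let m = min_{v ∈ V} r(v), and let C1 = {v ∈ V : l(v) ≤ m}. Suppose |C1| ≥ 3 and let α, β, γ be the three vertices of C1 with the smallest right endpoints, with r(α) < r(β) < r(γ). Then {α, β, γ} is a triangle of G, and τ(G) = max( τ(G − α), 1 + τ(G − {α, β, γ}) ), where G − S denotes the subgraph of G induced on V ∖ S. -/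
/-- τ(G): the maximum number of triangles in a triangle packing of G. -/
noncomputable def triangleNumber {V : Type*} (G : SimpleGraph V) : ℕ :=
  sSup {n | ∃ P : Finset (Finset V), IsTrianglePacking G P ∧ P.card = n}

open Finset

section Packings

variable {V W : Type*}

lemma isTriangle_map_iff (G : SimpleGraph V) (f : W ↪ V) (T : Finset W) :
    IsTriangle G (T.map f) ↔ IsTriangle (G.comap f) T := by
  rw [IsTriangle, IsTriangle, card_map, coe_map, f.injective.injOn.pairwise_image]
  rfl

lemma isTrianglePacking_map {G : SimpleGraph V} (f : W ↪ V) {P : Finset (Finset W)}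
    (hT : ∀ T ∈ P, IsTriangle G (T.map f))
    (hP : (P : Set (Finset W)).Pairwise fun S T => Disjoint S T) :
    IsTrianglePacking G (P.map (mapEmbedding f).toEmbedding) := by
  refine ⟨?_, ?_⟩
  · simp only [mem_map, RelEmbedding.coe_toEmbedding, mapEmbedding_apply]
    rintro _ ⟨T, hT', rfl⟩
    exact hT T hT'
  · rw [coe_map, (Function.Embedding.injective _).injOn.pairwise_image]
    intro S hS T hT hST
    exact (disjoint_map f).mpr (hP hS hT hST)

lemma isTrianglePacking_comap_iff (G : SimpleGraph V) (f : W ↪ V) (P : Finset (Finset W)) :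
    IsTrianglePacking (G.comap f) P ↔
      IsTrianglePacking G (P.map (mapEmbedding f).toEmbedding) := by
  refine ⟨fun hP => isTrianglePacking_map f (fun T hT => ?_) hP.2, fun hP => ⟨fun T hT => ?_, ?_⟩⟩
  · exact (isTriangle_map_iff G f T).mpr (hP.1 T hT)
  · exact (isTriangle_map_iff G f T).mp (hP.1 _ (mem_map_of_mem _ hT))
  · intro S hS T hT hST
    exact (disjoint_map f).mp (hP.2 (mem_map_of_mem _ hS) (mem_map_of_mem _ hT)
      ((RelEmbedding.injective _).ne hST))

lemma IsTrianglePacking.mono {G : SimpleGraph V} {P Q : Finset (Finset V)}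
    (hP : IsTrianglePacking G P) (hQ : Q ⊆ P) : IsTrianglePacking G Q :=
  ⟨fun T hT => hP.1 T (hQ hT), hP.2.mono (coe_subset.mpr hQ)⟩

lemma IsTrianglePacking.insert [DecidableEq V] {G : SimpleGraph V} {P : Finset (Finset V)}
    {T : Finset V} (hP : IsTrianglePacking G P) (hT : IsTriangle G T)
    (hdisj : ∀ S ∈ P, Disjoint T S) : IsTrianglePacking G (insert T P) := by
  refine ⟨fun S hS => ?_, ?_⟩
  · rcases mem_insert.mp hS with rfl | hS
    exacts [hT, hP.1 S hS]
  · rw [coe_insert]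
    exact hP.2.insert fun S hS _ => ⟨hdisj S hS, (hdisj S hS).symm⟩

lemma isTrianglePacking_empty (G : SimpleGraph V) : IsTrianglePacking G ∅ :=
  ⟨by simp, by simp⟩

variable [Finite V] (G : SimpleGraph V)

lemma bddAbove_card_isTrianglePacking :
    BddAbove {n | ∃ P : Finset (Finset V), IsTrianglePacking G P ∧ P.card = n} := by
  have := Fintype.ofFinite V
  refine ⟨Fintype.card (Finset V), ?_⟩
  rintro n ⟨P, -, rfl⟩
  exact card_le_univ P

variable {G} in
lemma IsTrianglePacking.card_le_triangleNumber {P : Finset (Finset V)}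
    (hP : IsTrianglePacking G P) : P.card ≤ triangleNumber G :=
  le_csSup (bddAbove_card_isTrianglePacking G) ⟨P, hP, rfl⟩

lemma exists_isTrianglePacking_card_eq_triangleNumber :
    ∃ P : Finset (Finset V), IsTrianglePacking G P ∧ P.card = triangleNumber G :=
  Nat.sSup_mem (s := {n | ∃ P : Finset (Finset V), IsTrianglePacking G P ∧ P.card = n})
    ⟨0, ∅, isTrianglePacking_empty G, card_empty⟩ (bddAbove_card_isTrianglePacking G)

lemma triangleNumber_induce_le (S : Set V) : triangleNumber (G.induce S) ≤ triangleNumber G := by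
  obtain ⟨Q, hQ, hQcard⟩ := exists_isTrianglePacking_card_eq_triangleNumber (G.induce S)
  rw [← hQcard, ← card_map (mapEmbedding _).toEmbedding]
  exact ((isTrianglePacking_comap_iff G _ Q).mp hQ).card_le_triangleNumber

variable {G} in
lemma IsTrianglePacking.card_le_triangleNumber_induce {P : Finset (Finset V)}
    (hP : IsTrianglePacking G P) {S : Set V} (hS : ∀ T ∈ P, ↑T ⊆ S) :
    P.card ≤ triangleNumber (G.induce S) := by
  classical
  set Q := P.image fun T => T.subtype (· ∈ S)
  have hQ : Q.map (mapEmbedding (.subtype _)).toEmbedding = P := by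
    rw [map_eq_image, image_image]
    conv_rhs => rw [← image_id (s := P)]
    exact image_congr fun T hT => subtype_map_of_mem (hS T hT)
  rw [← hQ, card_map]
  exact ((isTrianglePacking_comap_iff G _ Q).mpr (hQ ▸ hP)).card_le_triangleNumber

lemma triangleNumber_induce_compl_add_one_le [DecidableEq V] {T : Finset V}
    (hT : IsTriangle G T) : triangleNumber (G.induce {v | v ∉ T}) + 1 ≤ triangleNumber G := by
  obtain ⟨Q, hQ, hQcard⟩ := exists_isTrianglePacking_card_eq_triangleNumber (G.induce {v | v ∉ T})
  set P := Q.map (mapEmbedding (.subtype _)).toEmbedding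
  have hdisj : ∀ S ∈ P, Disjoint T S := by
    simp only [P, mem_map, RelEmbedding.coe_toEmbedding, mapEmbedding_apply]
    rintro _ ⟨U, -, rfl⟩
    simp only [disjoint_left, mem_map, Function.Embedding.coe_subtype, not_exists, not_and]
    rintro _ hx ⟨y, hy⟩ - rfl
    exact hy hx
  have hTP : T ∉ P := fun h => by
    simpa [disjoint_self.mp (hdisj T h)] using hT.1
  have hcard : (insert T P).card = triangleNumber (G.induce {v | v ∉ T}) + 1 := by
    rw [card_insert_of_notMem hTP, card_map, hQcard]
  rw [← hcard]
  exact (((isTrianglePacking_comap_iff G _ Q).mp hQ).insert hT hdisj).card_le_triangleNumber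

variable {G} in
lemma IsTrianglePacking.card_le_triangleNumber_induce_compl_add_one [DecidableEq V]
    {P : Finset (Finset V)} (hP : IsTrianglePacking G P) {T : Finset V} (hT : T ∈ P) :
    P.card ≤ triangleNumber (G.induce {v | v ∉ T}) + 1 := by
  have hS : ∀ S ∈ P.erase T, ↑S ⊆ {v | v ∉ T} := fun S hS x hx hxT =>
    disjoint_left.mp (hP.2 (mem_of_mem_erase hS) hT (ne_of_mem_erase hS)) hx hxT
  have := (hP.mono (erase_subset T P)).card_le_triangleNumber_induce hS
  rw [card_erase_of_mem hT] at this
  omega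

end Packings

section IntervalGraph

variable {V : Type*} {G : SimpleGraph V} {l r : V → ℝ} {m : ℝ}

lemma isClique_setOf_left_le (hadj : ∀ u v, G.Adj u v ↔ u ≠ v ∧ l u ≤ r v ∧ l v ≤ r u)
    (hm : ∀ v, m ≤ r v) : G.IsClique {v | l v ≤ m} := fun x hx y hy hxy =>
  (hadj x y).mpr ⟨hxy, hx.trans (hm y), hy.trans (hm x)⟩

lemma isTriangle_of_subset_setOf_left_le
    (hadj : ∀ u v, G.Adj u v ↔ u ≠ v ∧ l u ≤ r v ∧ l v ≤ r u) (hm : ∀ v, m ≤ r v)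
    {T : Finset V} (hT : T.card = 3) (hTm : ↑T ⊆ {v | l v ≤ m}) : IsTriangle G T :=
  ⟨hT, (isClique_setOf_left_le hadj hm).subset hTm⟩

lemma adj_of_adj_of_right_le_s3 (hadj : ∀ u v, G.Adj u v ↔ u ≠ v ∧ l u ≤ r v ∧ l v ≤ r u)
    (hm : ∀ v, m ≤ r v) {b s y : V} (hs : l s ≤ m) (hbs : r b ≤ r s) (hys : y ≠ s)
    (hby : G.Adj b y) : G.Adj s y := by
  obtain ⟨-, -, hyb⟩ := (hadj b y).mp hby
  exact (hadj s y).mpr ⟨hys.symm, hs.trans (hm y), hyb.trans hbs⟩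

lemma IsTriangle.subset_setOf_left_le (hadj : ∀ u v, G.Adj u v ↔ u ≠ v ∧ l u ≤ r v ∧ l v ≤ r u)
    {T : Finset V} (hT : IsTriangle G T) {a : V} (haT : a ∈ T) (hla : l a ≤ m) (hra : r a ≤ m) :
    ↑T ⊆ {v | l v ≤ m} := by
  intro x hx
  rcases eq_or_ne a x with rfl | hax
  · exact hla
  · exact ((hadj a x).mp (hT.2 haT hx hax)).2.2.trans hra

variable [DecidableEq V]

lemma coe_map_swap_subset {K : Set V} {T : Finset V} (hT : ↑T ⊆ K) {b s : V} (hb : b ∈ K)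
    (hs : s ∈ K) : ↑(T.map (Equiv.swap b s).toEmbedding) ⊆ K := by
  simp only [coe_map, Set.image_subset_iff]
  intro x hx
  rw [Set.mem_preimage, Equiv.coe_toEmbedding, Equiv.swap_apply_def]
  split_ifs
  exacts [hs, hb, hT hx]

lemma IsTriangle.map_swap (hadj : ∀ u v, G.Adj u v ↔ u ≠ v ∧ l u ≤ r v ∧ l v ≤ r u)
    (hm : ∀ v, m ≤ r v) {T : Finset V} (hT : IsTriangle G T) {b s : V} (hb : l b ≤ m)
    (hs : l s ≤ m) (hbs : r b ≤ r s) (hsT : s ∈ T → ↑T ⊆ {v | l v ≤ m}) :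
    IsTriangle G (T.map (Equiv.swap b s).toEmbedding) := by
  by_cases hs' : s ∈ T
  · exact isTriangle_of_subset_setOf_left_le hadj hm (by rw [card_map, hT.1])
      (coe_map_swap_subset (hsT hs') hb hs)
  have hσ : ∀ x ∈ T, Equiv.swap b s x = if x = b then s else x := fun x hx => by
    rw [Equiv.swap_apply_def, if_neg (ne_of_mem_of_not_mem hx hs')]
  refine ⟨by rw [card_map, hT.1], ?_⟩
  rw [coe_map, (Function.Embedding.injective _).injOn.pairwise_image]
  intro x hx y hy hxy
  simp only [Function.onFun, Equiv.coe_toEmbedding, hσ x hx, hσ y hy]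
  have hxy' := hT.2 hx hy hxy
  split_ifs with hxb hyb hyb
  · exact absurd (hxb.trans hyb.symm) hxy
  · exact adj_of_adj_of_right_le_s3 hadj hm hs hbs (ne_of_mem_of_not_mem hy hs') (hxb ▸ hxy')
  · exact (adj_of_adj_of_right_le_s3 hadj hm hs hbs (ne_of_mem_of_not_mem hx hs')
      (hyb ▸ hxy'.symm)).symm
  · exact hxy'

lemma IsTrianglePacking.map_swap (hadj : ∀ u v, G.Adj u v ↔ u ≠ v ∧ l u ≤ r v ∧ l v ≤ r u)
    (hm : ∀ v, m ≤ r v) {P : Finset (Finset V)} (hP : IsTrianglePacking G P) {T : Finset V}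
    (hT : T ∈ P) (hTm : ↑T ⊆ {v | l v ≤ m}) {b s : V} (hsT : s ∈ T) (hb : l b ≤ m)
    (hbs : r b ≤ r s) :
    IsTrianglePacking G (P.map (mapEmbedding (Equiv.swap b s).toEmbedding).toEmbedding) := by
  refine isTrianglePacking_map _
    (fun U hU => (hP.1 U hU).map_swap hadj hm hb (hTm hsT) hbs fun hsU => ?_) hP.2
  obtain rfl : U = T := by
    by_contra hUT
    exact disjoint_left.mp (hP.2 hU hT hUT) hsU hsT
  exact hTm

lemma IsTrianglePacking.exists_mem_of_subset_setOf_left_le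
    (hadj : ∀ u v, G.Adj u v ↔ u ≠ v ∧ l u ≤ r v ∧ l v ≤ r u) (hm : ∀ v, m ≤ r v)
    {P : Finset (Finset V)} (hP : IsTrianglePacking G P) {T : Finset V} (hT : T ∈ P)
    (hTm : ↑T ⊆ {v | l v ≤ m}) {B : Finset V} (hB : B.card = 3) (hBm : ↑B ⊆ {v | l v ≤ m})
    (hBmin : ∀ c ∈ B, ∀ v, l v ≤ m → v ∉ B → r c ≤ r v) :
    ∃ P' : Finset (Finset V), IsTrianglePacking G P' ∧ P'.card = P.card ∧ B ∈ P' := by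
  induction hn : (B \ T).card generalizing P T with
  | zero =>
    have hBT : B = T := eq_of_subset_of_card_le
      (sdiff_eq_empty_iff_subset.mp (card_eq_zero.mp hn)) (by rw [(hP.1 T hT).1, hB])
    exact ⟨P, hP, rfl, hBT ▸ hT⟩
  | succ n ih =>
    obtain ⟨c, hc⟩ : (B \ T).Nonempty := card_pos.mp (by omega)
    obtain ⟨s, hs⟩ : (T \ B).Nonempty := card_pos.mp <| by
      rw [card_sdiff_comm (by rw [(hP.1 T hT).1, hB])]
      omega
    rw [mem_sdiff] at hc hs
    have hsdiff : B \ T.map (Equiv.swap c s).toEmbedding = (B \ T).erase c := by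
      ext x
      simp only [mem_sdiff, mem_erase, mem_map_equiv, Equiv.symm_swap, Equiv.swap_apply_def]
      split_ifs <;> grind
    obtain ⟨P', hP', hcard, hBP'⟩ :=
      ih (hP.map_swap hadj hm hT hTm hs.1 (hBm hc.1) (hBmin c hc.1 s (hTm hs.1) hs.2))
        (mem_map_of_mem _ hT) (coe_map_swap_subset hTm (hBm hc.1) (hTm hs.1))
        (by rw [RelEmbedding.coe_toEmbedding, mapEmbedding_apply, hsdiff,
          card_erase_of_mem (mem_sdiff.mpr hc), hn, Nat.add_sub_cancel])
    exact ⟨P', hP', hcard.trans (card_map _), hBP'⟩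

lemma triangleNumber_le_max_of_right_le [Finite V]
    (hadj : ∀ u v, G.Adj u v ↔ u ≠ v ∧ l u ≤ r v ∧ l v ≤ r u) (hm : ∀ v, m ≤ r v) {a : V}
    (hla : l a ≤ m) (hra : r a ≤ m) {B : Finset V} (hB : B.card = 3) (hBm : ↑B ⊆ {v | l v ≤ m})
    (hBmin : ∀ c ∈ B, ∀ v, l v ≤ m → v ∉ B → r c ≤ r v) :
    triangleNumber G ≤
      max (triangleNumber (G.induce {v | v ≠ a})) (triangleNumber (G.induce {v | v ∉ B}) + 1) := by
  obtain ⟨P, hP, hPcard⟩ := exists_isTrianglePacking_card_eq_triangleNumber G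
  rw [← hPcard]
  by_cases hcov : ∀ T ∈ P, a ∉ T
  · exact le_max_of_le_left
      (hP.card_le_triangleNumber_induce fun T hT x hx (hxa : x = a) => hcov T hT (hxa ▸ hx))
  obtain ⟨T, hT, haT⟩ : ∃ T ∈ P, a ∈ T := by simpa using hcov
  obtain ⟨P', hP', hcard, hBP'⟩ := hP.exists_mem_of_subset_setOf_left_le hadj hm hT
    ((hP.1 T hT).subset_setOf_left_le hadj haT hla hra) hB hBm hBmin
  rw [← hcard]
  exact le_max_of_le_right (hP'.card_le_triangleNumber_induce_compl_add_one hBP')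

end IntervalGraph

theorem stmt3_general {V : Type*} [Fintype V] [DecidableEq V] (G : SimpleGraph V) (l r : V → ℝ)
    (hlr : ∀ v, l v ≤ r v)
    (hadj : ∀ u v, G.Adj u v ↔ u ≠ v ∧ l u ≤ r v ∧ l v ≤ r u)
    (w : V) (hw : ∀ v, r w ≤ r v)
    (α β γ : V) (hα : l α ≤ r w) (hβ : l β ≤ r w) (hγ : l γ ≤ r w)
    (hαβ : r α < r β) (hβγ : r β < r γ)
    (hsmall : ∀ v, l v ≤ r w → v ≠ α → v ≠ β → v ≠ γ → r γ < r v) :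
    IsTriangle G ({α, β, γ} : Finset V) ∧
      triangleNumber G =
        max (triangleNumber (G.induce {v | v ≠ α}))
          (1 + triangleNumber (G.induce {v | v ≠ α ∧ v ≠ β ∧ v ≠ γ})) := by
  have hαw : r α ≤ r w := by
    by_contra! h
    have := hsmall w (hlr w) (by rintro rfl; exact lt_irrefl _ h) (by rintro rfl; linarith)
      (by rintro rfl; linarith)
    linarith
  set B : Finset V := {α, β, γ}
  have hB : B.card = 3 := card_eq_three.mpr ⟨α, β, γ, by rintro rfl; linarith,
    by rintro rfl; linarith, by rintro rfl; linarith, rfl⟩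
  have hBm : ↑B ⊆ {v | l v ≤ r w} := by simp [B, Set.insert_subset_iff, hα, hβ, hγ]
  have hBmin : ∀ c ∈ B, ∀ v, l v ≤ r w → v ∉ B → r c ≤ r v := by
    intro c hc v hv hvB
    simp only [B, mem_insert, mem_singleton, not_or] at hc hvB
    have := hsmall v hv hvB.1 hvB.2.1 hvB.2.2
    rcases hc with rfl | rfl | rfl <;> linarith
  have htri : IsTriangle G B := isTriangle_of_subset_setOf_left_le hadj hw hB hBm
  have hS : {v | v ≠ α ∧ v ≠ β ∧ v ≠ γ} = {v | v ∉ B} := by ext; simp [B]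
  rw [hS, add_comm 1]
  exact ⟨htri, le_antisymm (triangleNumber_le_max_of_right_le hadj hw hα hαw hB hBm hBmin)
    (max_le (triangleNumber_induce_le G _) (triangleNumber_induce_compl_add_one_le G htri))⟩

/-- Let `G` be an interval graph with pairwise distinct right endpoints,
`m = r w` the minimum right endpoint, `C1 = {v | l v ≤ m}`, and let `α, β, γ` be the
three vertices of `C1` with the smallest right endpoints (in this order). Then
`{α, β, γ}` is a triangle of `G` and `τ(G) = max (τ(G - α)) (1 + τ(G - {α, β, γ}))`. -/
theorem stmt3 {V : Type*} [Fintype V] [DecidableEq V] (G : SimpleGraph V) (l r : V → ℝ)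
    (hlr : ∀ v, l v ≤ r v)
    (hadj : ∀ u v, G.Adj u v ↔ u ≠ v ∧ l u ≤ r v ∧ l v ≤ r u)
    (hinj : Function.Injective r)
    (w : V) (hw : ∀ v, r w ≤ r v)
    (α β γ : V) (hα : l α ≤ r w) (hβ : l β ≤ r w) (hγ : l γ ≤ r w)
    (hαβ : r α < r β) (hβγ : r β < r γ)
    (hsmall : ∀ v, l v ≤ r w → v ≠ α → v ≠ β → v ≠ γ → r γ < r v) :
    IsTriangle G ({α, β, γ} : Finset V) ∧
      triangleNumber G =
        max (triangleNumber (G.induce {v | v ≠ α}))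
          (1 + triangleNumber (G.induce {v | v ≠ α ∧ v ≠ β ∧ v ≠ γ})) :=
  stmt3_general G l r hlr hadj w hw α β γ hα hβ hγ hαβ hβγ hsmall
end

section
/- Let n be a positive integer, let π be a permutation of {1, …, n}, and let c : {1, …, n} → {1, 2, 3}. Define the bipartite graph G12 on vertex set {i : c(π(i)) = 1} ∪ {j : c(π(j)) = 2}, where a vertex i with c(π(i)) = 1 is adjacent to a vertex j with c(π(j)) = 2 if and only if i < j and π(i) < π(j); define the bipartite graph G23 on vertex set {j : c(π(j)) = 2} ∪ {k : c(π(k)) = 3}, where a vertex j with c(π(j)) = 2 is adjacent to a vertex k with c(π(k)) = 3 if and only if j < k and π(j) < π(k). Then there exists a partition of {1, …, n} into triples {i, j, k} with i < j < k such that π(i) < π(j) < π(k), c(π(i)) = 1, c(π(j)) = 2 and c(π(k)) = 3, if and only if both G12 and G23 have perfect matchings. -/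
/-- The bipartite graph `G12`: vertices are the positions with colors 1 and 2; a position
`i` of color 1 is adjacent to a position `j` of color 2 iff `i < j` and `π i < π j`. -/
def G12 (n : ℕ) (π : Equiv.Perm (Fin n)) (c : Fin n → ℕ) :
    SimpleGraph {i : Fin n // c (π i) = 1 ∨ c (π i) = 2} :=
  SimpleGraph.fromRel fun a b =>
    c (π a.1) = 1 ∧ c (π b.1) = 2 ∧ a.1 < b.1 ∧ π a.1 < π b.1

/-- The bipartite graph `G23`: vertices are the positions with colors 2 and 3; a position
`j` of color 2 is adjacent to a position `k` of color 3 iff `j < k` and `π j < π k`. -/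
def G23 (n : ℕ) (π : Equiv.Perm (Fin n)) (c : Fin n → ℕ) :
    SimpleGraph {i : Fin n // c (π i) = 2 ∨ c (π i) = 3} :=
  SimpleGraph.fromRel fun a b =>
    c (π a.1) = 2 ∧ c (π b.1) = 3 ∧ a.1 < b.1 ∧ π a.1 < π b.1

/-!
A perfect matching of the bipartite graph between two colour classes along a relation `r` is the
same thing as a bijection between the classes that moves every vertex along `r`. A partition into
increasing coloured triples `i, j, k` yields two such bijections, `i ↦ j` and `j ↦ k`; conversely
bijections `σ` (colour 1 to colour 2) and `τ` (colour 2 to colour 3) give back the partition into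
the triples `σ⁻¹ j, j, τ j`, one for each `j` of colour 2.
-/

section Bipartite

variable {V : Type*} {A B : V → Prop} {r : V → V → Prop}

variable (A B r) in
def bipartiteRelGraph : SimpleGraph {v // A v ∨ B v} :=
  SimpleGraph.fromRel fun x y => A x ∧ B y ∧ r x y

lemma bipartiteRelGraph_adj_of_left (hAB : ∀ v, A v → ¬ B v) {x y : {v // A v ∨ B v}}
    (hx : A x) : (bipartiteRelGraph A B r).Adj x y ↔ B y ∧ r x y := by
  rw [bipartiteRelGraph, SimpleGraph.fromRel_adj]
  constructor
  · rintro ⟨-, ⟨-, h⟩ | ⟨-, hBx, -⟩⟩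
    · exact h
    · exact absurd hBx (hAB _ hx)
  · rintro ⟨hy, hr⟩
    refine ⟨?_, Or.inl ⟨hx, hy, hr⟩⟩
    rintro rfl
    exact hAB _ hx hy

lemma bipartiteRelGraph_adj_of_right (hAB : ∀ v, A v → ¬ B v) {x y : {v // A v ∨ B v}}
    (hx : B x) : (bipartiteRelGraph A B r).Adj x y ↔ A y ∧ r y x := by
  rw [SimpleGraph.adj_comm, bipartiteRelGraph, SimpleGraph.fromRel_adj]
  constructor
  · rintro ⟨-, ⟨hy, -, h⟩ | ⟨hAx, -⟩⟩
    · exact ⟨hy, h⟩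
    · exact absurd hx (hAB _ hAx)
  · rintro ⟨hy, hr⟩
    refine ⟨?_, Or.inl ⟨hy, hx, hr⟩⟩
    rintro rfl
    exact hAB _ hy hx

theorem exists_equiv_of_isPerfectMatching (hAB : ∀ v, A v → ¬ B v)
    {M : (bipartiteRelGraph A B r).Subgraph} (hM : M.IsPerfectMatching) :
    ∃ σ : {v // A v} ≃ {v // B v}, ∀ a : {v // A v}, r a (σ a) := by
  rw [SimpleGraph.Subgraph.isPerfectMatching_iff] at hM
  choose m hm hm_unique using hM
  have hmm (x) : m (m x) = x := (hm_unique _ _ (M.adj_symm (hm x))).symm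
  have hA (a : {v // A v}) :=
    (bipartiteRelGraph_adj_of_left hAB a.2).1 (M.adj_sub (hm ⟨a, .inl a.2⟩))
  have hB (b : {v // B v}) :=
    (bipartiteRelGraph_adj_of_right hAB b.2).1 (M.adj_sub (hm ⟨b, .inr b.2⟩))
  refine ⟨⟨fun a => ⟨m ⟨a, .inl a.2⟩, (hA a).1⟩, fun b => ⟨m ⟨b, .inr b.2⟩, (hB b).1⟩,
    fun a => ?_, fun b => ?_⟩, fun a => (hA a).2⟩
  · exact Subtype.ext (congrArg Subtype.val (hmm ⟨a, .inl a.2⟩) :)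
  · exact Subtype.ext (congrArg Subtype.val (hmm ⟨b, .inr b.2⟩) :)

theorem exists_isPerfectMatching_of_equiv (hAB : ∀ v, A v → ¬ B v)
    (σ : {v // A v} ≃ {v // B v}) (hσ : ∀ a : {v // A v}, r a (σ a)) :
    ∃ M : (bipartiteRelGraph A B r).Subgraph, M.IsPerfectMatching := by
  let s : Set {v // A v ∨ B v} := {x | A x}
  let t : Set {v // A v ∨ B v} := {x | B x}
  have hst : Disjoint s t := Set.disjoint_left.mpr fun x hA hB => hAB _ hA hB
  let f : s ≃ t := (Equiv.subtypeSubtypeEquivSubtype Or.inl).trans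
    (σ.trans (Equiv.subtypeSubtypeEquivSubtype Or.inr).symm)
  obtain ⟨M, hverts, hM⟩ := SimpleGraph.Subgraph.IsMatching.exists_of_disjoint_sets_of_equiv hst f
    fun x => (bipartiteRelGraph_adj_of_left hAB x.2).2 ⟨(f x).2, hσ _⟩
  exact ⟨M, hM, fun x => hverts ▸ x.2⟩

theorem exists_isPerfectMatching_bipartiteRelGraph_iff (hAB : ∀ v, A v → ¬ B v) :
    (∃ M : (bipartiteRelGraph A B r).Subgraph, M.IsPerfectMatching) ↔
      ∃ σ : {v // A v} ≃ {v // B v}, ∀ a : {v // A v}, r a (σ a) :=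
  ⟨fun ⟨_, hM⟩ => exists_equiv_of_isPerfectMatching hAB hM,
    fun ⟨σ, hσ⟩ => exists_isPerfectMatching_of_equiv hAB σ hσ⟩

end Bipartite

open Finset

section TriplePartition

variable {V : Type*} [DecidableEq V] {A B C : V → Prop} {r : V → V → Prop}

variable (A B C r) in
def IsTriplePartition (P : Finset (Finset V)) : Prop :=
  (∀ T ∈ P, ∃ i j k, T = {i, j, k} ∧ A i ∧ B j ∧ C k ∧ r i j ∧ r j k) ∧
    (P : Set (Finset V)).Pairwise Disjoint ∧ ∀ v, ∃ T ∈ P, v ∈ T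

lemma eq_of_mem_colored_triple (hAB : ∀ v, A v → ¬ B v) (hAC : ∀ v, A v → ¬ C v)
    (hBC : ∀ v, B v → ¬ C v) {u i j k : V} (hi : A i) (hj : B j) (hk : C k)
    (hu : u ∈ ({i, j, k} : Finset V)) : (A u → u = i) ∧ (B u → u = j) ∧ (C u → u = k) := by
  simp only [mem_insert, mem_singleton] at hu
  rcases hu with rfl | rfl | rfl
  · exact ⟨fun _ => rfl, fun h => absurd h (hAB _ hi), fun h => absurd h (hAC _ hi)⟩
  · exact ⟨fun h => absurd hj (hAB _ h), fun _ => rfl, fun h => absurd h (hBC _ hj)⟩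
  · exact ⟨fun h => absurd hk (hAC _ h), fun h => absurd hk (hBC _ h), fun _ => rfl⟩

theorem IsTriplePartition.exists_equivs (hAB : ∀ v, A v → ¬ B v) (hAC : ∀ v, A v → ¬ C v)
    (hBC : ∀ v, B v → ¬ C v) {P : Finset (Finset V)} (hP : IsTriplePartition A B C r P) :
    (∃ σ : {v // A v} ≃ {v // B v}, ∀ a : {v // A v}, r a (σ a)) ∧
      ∃ τ : {v // B v} ≃ {v // C v}, ∀ b : {v // B v}, r b (τ b) := by
  obtain ⟨htriple, hdisj, hcover⟩ := hP
  have hblock (v : V) : ∃ i j k, {i, j, k} ∈ P ∧ v ∈ ({i, j, k} : Finset V) ∧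
      A i ∧ B j ∧ C k ∧ r i j ∧ r j k := by
    obtain ⟨T, hT, hvT⟩ := hcover v
    obtain ⟨i, j, k, rfl, h⟩ := htriple T hT
    exact ⟨i, j, k, hT, hvT, h⟩
  choose fi fj fk hmemP hmem hA hB hC hij hjk using hblock
  have hcoord (v : V) {u : V} (hu : u ∈ ({fi v, fj v, fk v} : Finset V)) :=
    eq_of_mem_colored_triple hAB hAC hBC (hA v) (hB v) (hC v) hu
  have hsame {u v : V} (hu : u ∈ ({fi v, fj v, fk v} : Finset V)) :
      fi u = fi v ∧ fj u = fj v ∧ fk u = fk v := by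
    have hT : ({fi u, fj u, fk u} : Finset V) = {fi v, fj v, fk v} := by
      by_contra hne
      exact disjoint_left.mp (hdisj (hmemP u) (hmemP v) hne) (hmem u) hu
    exact ⟨(hcoord v (hT ▸ by simp)).1 (hA u), (hcoord v (hT ▸ by simp)).2.1 (hB u),
      (hcoord v (hT ▸ by simp)).2.2 (hC u)⟩
  have hfi {a : V} (ha : A a) : fi a = a := ((hcoord a (hmem a)).1 ha).symm
  have hfj {b : V} (hb : B b) : fj b = b := ((hcoord b (hmem b)).2.1 hb).symm
  have hfk {c : V} (hc : C c) : fk c = c := ((hcoord c (hmem c)).2.2 hc).symm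
  refine ⟨⟨⟨fun a => ⟨fj a, hB a⟩, fun b => ⟨fi b, hA b⟩, fun a => ?_, fun b => ?_⟩, fun a => ?_⟩,
    ⟨⟨fun b => ⟨fk b, hC b⟩, fun c => ⟨fj c, hB c⟩, fun b => ?_, fun c => ?_⟩, fun b => ?_⟩⟩
  · exact Subtype.ext ((hsame (u := fj a) (by simp)).1.trans (hfi a.2))
  · exact Subtype.ext ((hsame (u := fi b) (by simp)).2.1.trans (hfj b.2))
  · have := hij a
    rwa [hfi a.2] at this
  · exact Subtype.ext ((hsame (u := fk b) (by simp)).2.1.trans (hfj b.2))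
  · exact Subtype.ext ((hsame (u := fj c) (by simp)).2.2.trans (hfk c.2))
  · have := hjk b
    rwa [hfj b.2] at this

theorem exists_isTriplePartition_of_equivs [Fintype V] (hAB : ∀ v, A v → ¬ B v)
    (hAC : ∀ v, A v → ¬ C v) (hBC : ∀ v, B v → ¬ C v) (hcover : ∀ v, A v ∨ B v ∨ C v)
    (σ : {v // A v} ≃ {v // B v}) (hσ : ∀ a : {v // A v}, r a (σ a))
    (τ : {v // B v} ≃ {v // C v}) (hτ : ∀ b : {v // B v}, r b (τ b)) :
    ∃ P, IsTriplePartition A B C r P := by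
  classical
  let T (b : {v // B v}) : Finset V := {(σ.symm b : V), (b : V), (τ b : V)}
  have hT {b b' : {v // B v}} {v : V} (h : v ∈ T b) (h' : v ∈ T b') : b = b' := by
    have hc := eq_of_mem_colored_triple hAB hAC hBC (σ.symm b).2 b.2 (τ b).2 h
    have hc' := eq_of_mem_colored_triple hAB hAC hBC (σ.symm b').2 b'.2 (τ b').2 h'
    rcases hcover v with hv | hv | hv
    · exact σ.symm.injective (Subtype.ext ((hc.1 hv).symm.trans (hc'.1 hv)))
    · exact Subtype.ext ((hc.2.1 hv).symm.trans (hc'.2.1 hv))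
    · exact τ.injective (Subtype.ext ((hc.2.2 hv).symm.trans (hc'.2.2 hv)))
  refine ⟨univ.image T, ?_, ?_, fun v => ?_⟩
  · simp only [mem_image, mem_univ, true_and, forall_exists_index, forall_apply_eq_imp_iff]
    intro b
    exact ⟨_, _, _, rfl, (σ.symm b).2, b.2, (τ b).2, by simpa using hσ (σ.symm b), hτ b⟩
  · simp only [coe_image, coe_univ, Set.image_univ]
    rintro _ ⟨b, rfl⟩ _ ⟨b', rfl⟩ hne
    exact disjoint_left.mpr fun v h h' => hne (congrArg T (hT h h'))
  · rcases hcover v with hv | hv | hv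
    · exact ⟨T (σ ⟨v, hv⟩), mem_image_of_mem _ (mem_univ _), by simp [T]⟩
    · exact ⟨T ⟨v, hv⟩, mem_image_of_mem _ (mem_univ _), by simp [T]⟩
    · exact ⟨T (τ.symm ⟨v, hv⟩), mem_image_of_mem _ (mem_univ _), by simp [T]⟩

theorem exists_isTriplePartition_iff [Fintype V] (hAB : ∀ v, A v → ¬ B v)
    (hAC : ∀ v, A v → ¬ C v) (hBC : ∀ v, B v → ¬ C v) (hcover : ∀ v, A v ∨ B v ∨ C v) :
    (∃ P, IsTriplePartition A B C r P) ↔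
      (∃ σ : {v // A v} ≃ {v // B v}, ∀ a : {v // A v}, r a (σ a)) ∧
        ∃ τ : {v // B v} ≃ {v // C v}, ∀ b : {v // B v}, r b (τ b) :=
  ⟨fun ⟨_, hP⟩ => hP.exists_equivs hAB hAC hBC,
    fun ⟨⟨σ, hσ⟩, τ, hτ⟩ => exists_isTriplePartition_of_equivs hAB hAC hBC hcover σ hσ τ hτ⟩

end TriplePartition

theorem stmt5_general (n : ℕ) (π : Equiv.Perm (Fin n)) (c : Fin n → ℕ)
    (hc : ∀ i, c i = 1 ∨ c i = 2 ∨ c i = 3) :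
    (∃ P : Finset (Finset (Fin n)),
        (∀ T ∈ P, ∃ i j k : Fin n, i < j ∧ j < k ∧ T = {i, j, k} ∧
          π i < π j ∧ π j < π k ∧ c (π i) = 1 ∧ c (π j) = 2 ∧ c (π k) = 3) ∧
        ((P : Set (Finset (Fin n))).Pairwise fun S T => Disjoint S T) ∧
        (∀ v : Fin n, ∃ T ∈ P, v ∈ T)) ↔
      ((∃ M : (G12 n π c).Subgraph, M.IsPerfectMatching) ∧
        (∃ M : (G23 n π c).Subgraph, M.IsPerfectMatching)) := by
  have h12 (v : Fin n) (h : c (π v) = 1) : c (π v) ≠ 2 := by omega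
  have h13 (v : Fin n) (h : c (π v) = 1) : c (π v) ≠ 3 := by omega
  have h23 (v : Fin n) (h : c (π v) = 2) : c (π v) ≠ 3 := by omega
  let r (i j : Fin n) : Prop := i < j ∧ π i < π j
  -- `G12 n π c` and `G23 n π c` are `bipartiteRelGraph _ _ r` by definition.
  refine Iff.trans ?_ <| (exists_isTriplePartition_iff (r := r) h12 h13 h23 fun v => hc (π v)).trans
    <| and_congr (exists_isPerfectMatching_bipartiteRelGraph_iff (r := r) h12).symm
      (exists_isPerfectMatching_bipartiteRelGraph_iff (r := r) h23).symm
  refine exists_congr fun P => and_congr (forall₂_congr fun T _ => ⟨?_, ?_⟩) Iff.rfl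
  · rintro ⟨i, j, k, hij, hjk, rfl, hπij, hπjk, hi, hj, hk⟩
    exact ⟨i, j, k, rfl, hi, hj, hk, ⟨hij, hπij⟩, hjk, hπjk⟩
  · rintro ⟨i, j, k, rfl, hi, hj, hk, ⟨hij, hπij⟩, hjk, hπjk⟩
    exact ⟨i, j, k, hij, hjk, rfl, hπij, hπjk, hi, hj, hk⟩

/-- There is a partition of `{1, …, n}` into colored increasing triples
for the permutation `π` if and only if both `G12` and `G23` have perfect matchings. -/
theorem stmt5 (n : ℕ) (hn : 0 < n) (π : Equiv.Perm (Fin n)) (c : Fin n → ℕ)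
    (hc : ∀ i, c i = 1 ∨ c i = 2 ∨ c i = 3) :
    (∃ P : Finset (Finset (Fin n)),
        (∀ T ∈ P, ∃ i j k : Fin n, i < j ∧ j < k ∧ T = {i, j, k} ∧
          π i < π j ∧ π j < π k ∧ c (π i) = 1 ∧ c (π j) = 2 ∧ c (π k) = 3) ∧
        ((P : Set (Finset (Fin n))).Pairwise fun S T => Disjoint S T) ∧
        (∀ v : Fin n, ∃ T ∈ P, v ∈ T)) ↔
      ((∃ M : (G12 n π c).Subgraph, M.IsPerfectMatching) ∧
        (∃ M : (G23 n π c).Subgraph, M.IsPerfectMatching)) :=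
  stmt5_general n π c hc
end

section
/- Let G be a complete multipartite graph with color classes A1, …, At, where t ≥ 3, and suppose G has a triangle partition. Let B1, B2, B3 be three pairwise distinct classes such that every class other than B1, B2, B3 has cardinality at most min(|B1|, |B2|, |B3|), and let T consist of one vertex chosen from each of B1, B2, B3. Then the subgraph of G induced on the complement of T has a triangle partition. -/
def IsTrianglePartition {V : Type*} (G : SimpleGraph V) (P : Finset (Finset V)) : Prop :=
  IsTrianglePacking G P ∧ ∀ v, ∃ T ∈ P, v ∈ T

section

open Finset

variable {V ι : Type*}

lemma isTriangle_iff_isNClique {G : SimpleGraph V} {T : Finset V} :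
    IsTriangle G T ↔ G.IsNClique 3 T := by
  rw [SimpleGraph.isNClique_iff, and_comm]
  rfl

variable [DecidableEq V]

lemma isTriangle_of_ne {G : SimpleGraph V} {f : V → ι} (hG : ∀ u v, f u ≠ f v → G.Adj u v)
    {u1 u2 u3 : V} (h12 : f u1 ≠ f u2) (h13 : f u1 ≠ f u3) (h23 : f u2 ≠ f u3) :
    IsTriangle G {u1, u2, u3} :=
  isTriangle_iff_isNClique.mpr
    (SimpleGraph.is3Clique_triple_iff.mpr ⟨hG _ _ h12, hG _ _ h13, hG _ _ h23⟩)

def IsTrianglePartitionOn (G : SimpleGraph V) (s : Finset V) (P : Finset (Finset V)) : Prop :=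
  IsTrianglePacking G P ∧ P.biUnion id = s

section TrianglePartitionOn

variable {G : SimpleGraph V} {s T : Finset V} {P : Finset (Finset V)}

lemma isTrianglePartitionOn_univ_iff [Fintype V] :
    IsTrianglePartitionOn G univ P ↔ IsTrianglePartition G P := by
  simp only [IsTrianglePartitionOn, IsTrianglePartition, eq_univ_iff_forall, mem_biUnion, id]

lemma isTrianglePartitionOn_empty : IsTrianglePartitionOn G ∅ ∅ :=
  ⟨⟨by simp, by simp⟩, rfl⟩

lemma IsTrianglePartitionOn.insert (hP : IsTrianglePartitionOn G (s \ T) P)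
    (hT : IsTriangle G T) (hTs : T ⊆ s) : IsTrianglePartitionOn G s (insert T P) := by
  obtain ⟨⟨htri, hdisj⟩, hcover⟩ := hP
  refine ⟨⟨forall_mem_insert _ _ _ |>.mpr ⟨hT, htri⟩, ?_⟩, ?_⟩
  · rw [coe_insert, Set.pairwise_insert_of_symm]
    refine ⟨hdisj, fun T' hT' _ => ?_⟩
    have hT's : T' ⊆ s \ T := hcover ▸ subset_biUnion_of_mem id hT'
    exact disjoint_sdiff.mono_right hT's
  · rw [biUnion_insert, hcover, id, union_sdiff_of_subset hTs]

lemma IsTrianglePartitionOn.card_eq (hP : IsTrianglePartitionOn G s P) : #s = 3 * #P := by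
  rw [← hP.2, card_biUnion (t := id) hP.1.2, mul_comm]
  exact sum_const_nat fun T hT => (hP.1.1 T hT).1

lemma IsTrianglePartitionOn.card_filter_le [DecidableEq ι] {f : V → ι}
    (hG : ∀ u v, G.Adj u v → f u ≠ f v) (hP : IsTrianglePartitionOn G s P) (j : ι) :
    #{v ∈ s | f v = j} ≤ #P := by
  have hle_one : ∀ T ∈ P, #{v ∈ T | f v = j} ≤ 1 := by
    refine fun T hT => card_le_one.mpr fun a ha b hb => ?_
    rw [mem_filter] at ha hb
    by_contra hab
    exact hG a b ((hP.1.1 T hT).2 ha.1 hb.1 hab) (ha.2.trans hb.2.symm)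
  calc #{v ∈ s | f v = j}
      = #(P.biUnion fun T => {v ∈ T | f v = j}) := by rw [← hP.2, filter_biUnion]; rfl
    _ ≤ ∑ T ∈ P, #{v ∈ T | f v = j} := card_biUnion_le
    _ ≤ ∑ _T ∈ P, 1 := sum_le_sum hle_one
    _ = #P := by rw [sum_const, smul_eq_mul, mul_one]

end TrianglePartitionOn

lemma IsTrianglePartitionOn.exists_isTrianglePartition_induce {G : SimpleGraph V} {s : Finset V}
    {P : Finset (Finset V)} (hP : IsTrianglePartitionOn G s P) {p : V → Prop} [DecidablePred p]
    (hs : ∀ v, v ∈ s ↔ p v) :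
    ∃ Q : Finset (Finset {v // p v}), IsTrianglePartition (G.induce {v | p v}) Q := by
  obtain ⟨⟨htri, hdisj⟩, hcover⟩ := hP
  have hsub : ∀ T ∈ P, T ⊆ s := fun T hT => hcover ▸ subset_biUnion_of_mem id hT
  refine ⟨P.image (Finset.subtype p), ⟨⟨?_, ?_⟩, ?_⟩⟩
  · simp only [forall_mem_image]
    intro T hT
    refine ⟨?_, fun a ha b hb hab => (htri T hT).2 (mem_subtype.mp ha) (mem_subtype.mp hb)
      (Subtype.coe_ne_coe.mpr hab)⟩
    rw [card_subtype, filter_true_of_mem fun v hv => (hs v).mp (hsub T hT hv)]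
    exact (htri T hT).1
  · rw [coe_image]
    refine Set.Pairwise.image (hdisj.mono' fun S T h => ?_)
    exact disjoint_left.mpr fun a ha hb =>
      disjoint_left.mp h (mem_subtype.mp ha) (mem_subtype.mp hb)
  · intro v
    obtain ⟨T, hT, hvT⟩ := mem_biUnion.mp (hcover ▸ (hs v).mpr v.2 : (v : V) ∈ P.biUnion id)
    exact ⟨T.subtype p, mem_image_of_mem _ hT, mem_subtype.mpr hvT⟩

lemma Finset.exists_three_max_image {g : ι → ℕ} {I : Finset ι} (hI : 3 ≤ #I) :
    ∃ j1 ∈ I, ∃ j2 ∈ I, ∃ j3 ∈ I, j1 ≠ j2 ∧ j1 ≠ j3 ∧ j2 ≠ j3 ∧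
      ∀ j ∈ I, j ≠ j1 → j ≠ j2 → j ≠ j3 → g j ≤ min (g j1) (min (g j2) (g j3)) := by
  classical
  obtain ⟨j1, hj1, hmax1⟩ := I.exists_max_image g (card_pos.mp (by omega))
  obtain ⟨j2, hj2, hmax2⟩ := (I.erase j1).exists_max_image g
    (card_pos.mp (by rw [card_erase_of_mem hj1]; omega))
  obtain ⟨j3, hj3, hmax3⟩ := ((I.erase j1).erase j2).exists_max_image g
    (card_pos.mp (by rw [card_erase_of_mem hj2, card_erase_of_mem hj1]; omega))
  simp only [mem_erase] at hj2 hj3 hmax2 hmax3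
  refine ⟨j1, hj1, j2, hj2.2, j3, hj3.2.2, hj2.1.symm, hj3.2.1.symm, hj3.1.symm,
    fun j hj h1 h2 h3 => ?_⟩
  have := hmax1 j2 hj2.2
  have := hmax2 j3 hj3.2
  have := hmax3 j ⟨h2, h1, hj⟩
  omega

section ClassCounts

variable [DecidableEq ι] {f : V → ι} {s : Finset V} {m : ℕ}

lemma card_filter_sdiff_triple_le (hs : #s = 3 * (m + 1))
    (hcls : ∀ j, #{v ∈ s | f v = j} ≤ m + 1) {u1 u2 u3 : V}
    (hu1 : u1 ∈ s) (hu2 : u2 ∈ s) (hu3 : u3 ∈ s)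
    (h12 : f u1 ≠ f u2) (h13 : f u1 ≠ f u3) (h23 : f u2 ≠ f u3)
    (hdom : ∀ j, j ≠ f u1 → j ≠ f u2 → j ≠ f u3 → #{v ∈ s | f v = j} ≤
      min #{v ∈ s | f v = f u1} (min #{v ∈ s | f v = f u2} #{v ∈ s | f v = f u3})) :
    #(s \ {u1, u2, u3}) = 3 * m ∧ ∀ j, #{v ∈ s \ {u1, u2, u3} | f v = j} ≤ m := by
  have hTs : {u1, u2, u3} ⊆ s := by
    simp only [insert_subset_iff, singleton_subset_iff, *, and_self]
  have hT : #{u1, u2, u3} = 3 := card_eq_three.mpr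
    ⟨u1, u2, u3, ne_of_apply_ne f h12, ne_of_apply_ne f h13, ne_of_apply_ne f h23, rfl⟩
  refine ⟨by rw [card_sdiff_of_subset hTs, hT, hs]; omega, fun j => ?_⟩
  by_cases hj : j = f u1 ∨ j = f u2 ∨ j = f u3
  · obtain ⟨u, hu, huT, rfl⟩ : ∃ u ∈ s, u ∈ ({u1, u2, u3} : Finset V) ∧ f u = j := by
      rcases hj with rfl | rfl | rfl
      exacts [⟨u1, hu1, by simp, rfl⟩, ⟨u2, hu2, by simp, rfl⟩, ⟨u3, hu3, by simp, rfl⟩]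
    have hsub : {v ∈ s \ {u1, u2, u3} | f v = f u} ⊆ {v ∈ s | f v = f u}.erase u := by
      intro v hv
      simp only [mem_filter, mem_sdiff] at hv
      exact mem_erase.mpr ⟨fun h => hv.1.2 (h ▸ huT), mem_filter.mpr ⟨hv.1.1, hv.2⟩⟩
    have hu' : u ∈ {v ∈ s | f v = f u} := mem_filter.mpr ⟨hu, rfl⟩
    have := card_le_card hsub
    rw [card_erase_of_mem hu'] at this
    have := hcls (f u)
    omega
  · obtain ⟨h1, h2, h3⟩ : j ≠ f u1 ∧ j ≠ f u2 ∧ j ≠ f u3 := by tauto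
    have hfour := sum_card_fiberwise_eq_card_filter s {j, f u1, f u2, f u3} f
    rw [sum_insert (by simp [h1, h2, h3]), sum_insert (by simp [h12, h13]),
      sum_insert (by simp [h23]), sum_singleton] at hfour
    have := card_filter_le s fun v => f v ∈ ({j, f u1, f u2, f u3} : Finset ι)
    have := card_le_card
      (filter_subset_filter (f · = j) (sdiff_subset (s := s) (t := {u1, u2, u3})))
    have := hdom j h1 h2 h3
    omega

end ClassCounts

section Existence

variable [DecidableEq ι] {G : SimpleGraph V} {f : V → ι}

theorem exists_isTrianglePartitionOn (hG : ∀ u v, f u ≠ f v → G.Adj u v) {m : ℕ}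
    {s : Finset V} (hs : #s = 3 * m) (hcls : ∀ j, #{v ∈ s | f v = j} ≤ m) :
    ∃ P, IsTrianglePartitionOn G s P := by
  induction m generalizing s with
  | zero =>
    rw [card_eq_zero.mp hs]
    exact ⟨∅, isTrianglePartitionOn_empty⟩
  | succ m ih =>
    have himage : 3 ≤ #(s.image f) := by
      have := card_le_mul_card_image s (m + 1) fun j _ => hcls j
      nlinarith
    obtain ⟨_, hj1, _, hj2, _, hj3, h12, h13, h23, hdom⟩ :=
      exists_three_max_image (g := fun j => #{v ∈ s | f v = j}) himage
    obtain ⟨u1, hu1, rfl⟩ := mem_image.mp hj1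
    obtain ⟨u2, hu2, rfl⟩ := mem_image.mp hj2
    obtain ⟨u3, hu3, rfl⟩ := mem_image.mp hj3
    have hdom' : ∀ j, j ≠ f u1 → j ≠ f u2 → j ≠ f u3 → #{v ∈ s | f v = j} ≤
        min #{v ∈ s | f v = f u1} (min #{v ∈ s | f v = f u2} #{v ∈ s | f v = f u3}) := by
      intro j h1 h2 h3
      by_cases hj : j ∈ s.image f
      · exact hdom j hj h1 h2 h3
      · rw [filter_false_of_mem fun v hv (hfv : f v = j) => hj (hfv ▸ mem_image_of_mem f hv),
          card_empty]
        exact Nat.zero_le _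
    obtain ⟨hcard, hcls'⟩ := card_filter_sdiff_triple_le hs hcls hu1 hu2 hu3 h12 h13 h23 hdom'
    obtain ⟨P, hP⟩ := ih hcard hcls'
    have hTs : {u1, u2, u3} ⊆ s := by
      simp only [insert_subset_iff, singleton_subset_iff, *, and_self]
    exact ⟨_, hP.insert (isTriangle_of_ne hG h12 h13 h23) hTs⟩

end Existence

end

theorem stmt7_general {V : Type*} [Fintype V] (t : ℕ) (f : V → Fin t)
    (G : SimpleGraph V)
    (hG : ∀ u v, G.Adj u v ↔ f u ≠ f v)
    (hpart : ∃ P : Finset (Finset V), IsTrianglePartition G P)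
    (i1 i2 i3 : Fin t) (h12 : i1 ≠ i2) (h13 : i1 ≠ i3) (h23 : i2 ≠ i3)
    (hmax : ∀ j : Fin t, j ≠ i1 → j ≠ i2 → j ≠ i3 →
      {v | f v = j}.ncard ≤
        min {v | f v = i1}.ncard (min {v | f v = i2}.ncard {v | f v = i3}.ncard))
    (v1 v2 v3 : V) (hv1 : f v1 = i1) (hv2 : f v2 = i2) (hv3 : f v3 = i3) :
    ∃ P : Finset (Finset {v : V // v ≠ v1 ∧ v ≠ v2 ∧ v ≠ v3}),
      IsTrianglePartition (G.induce {v | v ≠ v1 ∧ v ≠ v2 ∧ v ≠ v3}) P := by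
  classical
  subst hv1 hv2 hv3
  obtain ⟨P₀, hP₀⟩ := hpart
  rw [← isTrianglePartitionOn_univ_iff] at hP₀
  obtain ⟨m, hm⟩ : ∃ m, P₀.card = m + 1 :=
    Nat.exists_eq_succ_of_ne_zero fun h => (Finset.univ_nonempty_iff.mpr ⟨v1⟩).card_pos.ne'
      (by rw [hP₀.card_eq, h])
  have hcls := hm ▸ hP₀.card_filter_le fun u v => (hG u v).mp
  simp only [Set.ncard_eq_toFinset_card', Set.toFinset_ofPred] at hmax
  obtain ⟨hcard, hcls'⟩ := card_filter_sdiff_triple_le (hm ▸ hP₀.card_eq) hcls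
    (Finset.mem_univ v1) (Finset.mem_univ v2) (Finset.mem_univ v3) h12 h13 h23 hmax
  obtain ⟨P, hP⟩ := exists_isTrianglePartitionOn (fun u v => (hG u v).mpr) hcard hcls'
  exact hP.exists_isTrianglePartition_induce fun v => by simp

/-- Let `G` be the complete multipartite graph whose color classes are the
fibers of `f : V → Fin t` (all nonempty), `t ≥ 3`, and suppose `G` has a triangle
partition. Let `i1, i2, i3` be three distinct classes such that every other class is no
larger than each of them, and pick one vertex `v1, v2, v3` from each. Then the subgraph
of `G` induced on the complement of `{v1, v2, v3}` has a triangle partition. -/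
theorem stmt7 {V : Type*} [Fintype V] (t : ℕ) (ht : 3 ≤ t) (f : V → Fin t)
    (hf : Function.Surjective f) (G : SimpleGraph V)
    (hG : ∀ u v, G.Adj u v ↔ f u ≠ f v)
    (hpart : ∃ P : Finset (Finset V), IsTrianglePartition G P)
    (i1 i2 i3 : Fin t) (h12 : i1 ≠ i2) (h13 : i1 ≠ i3) (h23 : i2 ≠ i3)
    (hmax : ∀ j : Fin t, j ≠ i1 → j ≠ i2 → j ≠ i3 →
      {v | f v = j}.ncard ≤
        min {v | f v = i1}.ncard (min {v | f v = i2}.ncard {v | f v = i3}.ncard))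
    (v1 v2 v3 : V) (hv1 : f v1 = i1) (hv2 : f v2 = i2) (hv3 : f v3 = i3) :
    ∃ P : Finset (Finset {v : V // v ≠ v1 ∧ v ≠ v2 ∧ v ≠ v3}),
      IsTrianglePartition (G.induce {v | v ≠ v1 ∧ v ≠ v2 ∧ v ≠ v3}) P :=
  stmt7_general t f G hG hpart i1 i2 i3 h12 h13 h23 hmax v1 v2 v3 hv1 hv2 hv3
end

section
/- Let G be a bipartite permutation graph with bipartition (X, Y), given by a permutation diagram t, b : V → ℝ. Let P be a C4-packing of G containing two squares C1 = {a, b̂, r, s} and C2 = {c, d, p, q} with a, b̂, c, d ∈ X and p, q, r, s ∈ Y, such that t(a) < t(b̂) < t(c) < t(d) and t(p) < t(q) < t(r) < t(s). Then there exists a C4-packing P′ of G with |P′| = |P| such that {a, b̂, p, q} and {c, d, r, s} are squares of P′. -/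
/-- A square: a set of four vertices inducing a 4-cycle `C4`. -/
def IsC4Square {V : Type*} [DecidableEq V] (G : SimpleGraph V) (S : Finset V) : Prop :=
  ∃ v1 v2 v3 v4 : V, S = {v1, v2, v3, v4} ∧ S.card = 4 ∧
    G.Adj v1 v2 ∧ G.Adj v2 v3 ∧ G.Adj v3 v4 ∧ G.Adj v4 v1 ∧
    ¬G.Adj v1 v3 ∧ ¬G.Adj v2 v4

/-- A `C4`-packing: a collection of pairwise vertex-disjoint squares. -/
def IsC4Packing {V : Type*} [DecidableEq V] (G : SimpleGraph V)
    (P : Finset (Finset V)) : Prop :=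
  (∀ S ∈ P, IsC4Square G S) ∧
    (P : Set (Finset V)).Pairwise fun S T => Disjoint S T

/-
Two vertices on the same side are non-adjacent, so their order on the bottom line agrees with
their order on the top line. Hence if `x₁ < x₂` and `y₁ < y₂` on the top line and the crossing
pairs `x₁y₂`, `x₂y₁` are edges, then so are the parallel pairs `x₁y₁`, `x₂y₂`. The diagonals
are the only non-edges of a 4-cycle, so both given squares are complete between their sides,
and this uncrossing yields every edge of `{a, b', p, q}` and `{c, d, r, s}`. These cover the
same vertices as the old squares and can replace them in the packing.
-/
section

open Finset

variable {V : Type*} {G : SimpleGraph V}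

section

variable [DecidableEq V]

theorem Finset.pairwise_ne_of_card_eq_four {a b c d : V} (h : #{a, b, c, d} = 4) :
    a ≠ b ∧ a ≠ c ∧ a ≠ d ∧ b ≠ c ∧ b ≠ d ∧ c ≠ d := by
  refine ⟨?_, ?_, ?_, ?_, ?_, ?_⟩ <;> rintro rfl <;>
    simp only [insert_eq_of_mem, mem_insert, mem_singleton, true_or, or_true] at h <;>
    exact (card_le_three.trans_lt (by norm_num)).ne h

theorem IsC4Square.card_eq_four {S : Finset V} (hS : IsC4Square G S) : #S = 4 := by
  obtain ⟨_, _, _, _, -, hcard, -⟩ := hS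
  exact hcard

theorem IsC4Square.adj_of_not_adj {S : Finset V} (hS : IsC4Square G S) {u v w : V}
    (hu : u ∈ S) (hv : v ∈ S) (hw : w ∈ S) (huv : u ≠ v) (huw : u ≠ w) (hvw : v ≠ w)
    (h : ¬G.Adj u v) : G.Adj u w := by
  obtain ⟨v₁, v₂, v₃, v₄, rfl, -, h₁₂, h₂₃, h₃₄, h₄₁, -, -⟩ := hS
  simp only [mem_insert, mem_singleton] at hu hv hw
  rcases hu with rfl | rfl | rfl | rfl <;> rcases hv with rfl | rfl | rfl | rfl <;>
    rcases hw with rfl | rfl | rfl | rfl <;> simp_all [SimpleGraph.adj_comm]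

theorem IsC4Square.adj_cross_of_not_adj {x₁ x₂ y₁ y₂ : V}
    (hS : IsC4Square G {x₁, x₂, y₁, y₂}) (hx : ¬G.Adj x₁ x₂) :
    G.Adj x₁ y₁ ∧ G.Adj x₁ y₂ ∧ G.Adj x₂ y₁ ∧ G.Adj x₂ y₂ := by
  obtain ⟨h₁₂, h₁₃, h₁₄, h₂₃, h₂₄, -⟩ := pairwise_ne_of_card_eq_four hS.card_eq_four
  have hx' : ¬G.Adj x₂ x₁ := fun h => hx h.symm
  exact ⟨hS.adj_of_not_adj (by simp) (by simp) (by simp) h₁₂ h₁₃ h₂₃ hx,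
    hS.adj_of_not_adj (by simp) (by simp) (by simp) h₁₂ h₁₄ h₂₄ hx,
    hS.adj_of_not_adj (by simp) (by simp) (by simp) h₁₂.symm h₂₃ h₁₃ hx',
    hS.adj_of_not_adj (by simp) (by simp) (by simp) h₁₂.symm h₂₄ h₁₄ hx'⟩

theorem isC4Square_of_adj {x₁ x₂ y₁ y₂ : V} (hx : x₁ ≠ x₂) (hy : y₁ ≠ y₂)
    (hnx : ¬G.Adj x₁ x₂) (hny : ¬G.Adj y₁ y₂) (h₁₁ : G.Adj x₁ y₁) (h₁₂ : G.Adj x₁ y₂)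
    (h₂₁ : G.Adj x₂ y₁) (h₂₂ : G.Adj x₂ y₂) : IsC4Square G {x₁, x₂, y₁, y₂} := by
  refine ⟨x₁, y₁, x₂, y₂, by ext; simp only [mem_insert, mem_singleton]; tauto, ?_, h₁₁, h₂₁.symm, h₂₂, h₁₂.symm, hnx, hny⟩
  rw [card_eq_four]
  exact ⟨x₁, x₂, y₁, y₂, hx, h₁₁.ne, h₁₂.ne, h₂₁.ne, h₂₂.ne, hy, rfl⟩

theorem IsC4Packing.exchange {P : Finset (Finset V)} (hP : IsC4Packing G P)
    {S₁ S₂ T₁ T₂ : Finset V} (hS₁ : S₁ ∈ P) (hS₂ : S₂ ∈ P)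
    (hT₁ : IsC4Square G T₁) (hT₂ : IsC4Square G T₂) (hT : Disjoint T₁ T₂)
    (hsub : T₁ ∪ T₂ ⊆ S₁ ∪ S₂) :
    ∃ P' : Finset (Finset V), IsC4Packing G P' ∧ #P' = #P ∧ T₁ ∈ P' ∧ T₂ ∈ P' := by
  have hS : S₁ ≠ S₂ := by
    rintro rfl
    have := card_le_card hsub
    rw [card_union_of_disjoint hT, union_self, hT₁.card_eq_four, hT₂.card_eq_four,
      (hP.1 _ hS₁).card_eq_four] at this
    omega
  set Q := (P.erase S₁).erase S₂
  have hQP : Q ⊆ P := (erase_subset _ _).trans (erase_subset _ _)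
  have hQ : ∀ R ∈ Q, Disjoint R T₁ ∧ Disjoint R T₂ := by
    intro R hR
    obtain ⟨hR₂, hR₁, hRP⟩ : R ≠ S₂ ∧ R ≠ S₁ ∧ R ∈ P := by simpa [Q] using hR
    have : Disjoint R (S₁ ∪ S₂) := disjoint_union_right.2 ⟨hP.2 hRP hS₁ hR₁, hP.2 hRP hS₂ hR₂⟩
    rw [union_subset_iff] at hsub
    exact ⟨this.mono_right hsub.1, this.mono_right hsub.2⟩
  have nonempty : ∀ {T}, IsC4Square G T → T.Nonempty := fun h =>
    card_pos.1 (by rw [h.card_eq_four]; norm_num)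
  have hT₁Q : T₁ ∉ Q := fun h => (nonempty hT₁).ne_empty (disjoint_self.1 (hQ _ h).1)
  have hT₂Q : T₂ ∉ Q := fun h => (nonempty hT₂).ne_empty (disjoint_self.1 (hQ _ h).2)
  have hT₁₂ : T₁ ∉ insert T₂ Q := by
    rw [mem_insert, not_or]
    exact ⟨fun h => (nonempty hT₁).ne_empty (disjoint_self.1 (h ▸ hT)), hT₁Q⟩
  refine ⟨insert T₁ (insert T₂ Q), ⟨?_, ?_⟩, ?_, mem_insert_self _ _,
    mem_insert_of_mem (mem_insert_self _ _)⟩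
  · simp only [mem_insert]
    rintro S (rfl | rfl | hS)
    exacts [hT₁, hT₂, hP.1 S (hQP hS)]
  · simp only [coe_insert, Set.pairwise_insert]
    refine ⟨⟨hP.2.mono hQP, fun R hR _ => ⟨(hQ R hR).2.symm, (hQ R hR).2⟩⟩, ?_⟩
    rintro R (rfl | hR) -
    · exact ⟨hT, hT.symm⟩
    · exact ⟨(hQ R hR).1.symm, (hQ R hR).1⟩
  · have h₂ : S₂ ∈ P.erase S₁ := mem_erase.2 ⟨hS.symm, hS₂⟩
    have hP2 : 2 ≤ #P := one_lt_card.2 ⟨_, hS₁, _, hS₂, hS⟩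
    rw [card_insert_of_notMem hT₁₂, card_insert_of_notMem hT₂Q, card_erase_of_mem h₂,
      card_erase_of_mem hS₁]
    omega

end

theorem bot_le_of_not_adj {top bot : V → ℝ}
    (hadj : ∀ u v, G.Adj u v ↔
      (top u < top v ∧ bot v < bot u) ∨ (top v < top u ∧ bot u < bot v))
    {u v : V} (ht : top u < top v) (hn : ¬G.Adj u v) : bot u ≤ bot v :=
  not_lt.1 fun hb => hn ((hadj u v).2 (Or.inl ⟨ht, hb⟩))

theorem adj_of_crossing {top bot : V → ℝ}
    (hadj : ∀ u v, G.Adj u v ↔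
      (top u < top v ∧ bot v < bot u) ∨ (top v < top u ∧ bot u < bot v))
    {x₁ x₂ y₁ y₂ : V} (htx : top x₁ < top x₂) (hty : top y₁ < top y₂)
    (hnx : ¬G.Adj x₁ x₂) (hny : ¬G.Adj y₁ y₂) (h₁₂ : G.Adj x₁ y₂) (h₂₁ : G.Adj x₂ y₁) :
    G.Adj x₁ y₁ ∧ G.Adj x₂ y₂ := by
  have hbx := bot_le_of_not_adj hadj htx hnx
  have hby := bot_le_of_not_adj hadj hty hny
  simp only [hadj] at h₁₂ h₂₁ ⊢
  rcases h₁₂ with ⟨_, _⟩ | ⟨_, _⟩ <;> rcases h₂₁ with ⟨_, _⟩ | ⟨_, _⟩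
  -- in the two mixed cases the hypotheses are contradictory, and `linarith` closes them
  all_goals first
    | exact ⟨Or.inl ⟨by linarith, by linarith⟩, Or.inl ⟨by linarith, by linarith⟩⟩
    | exact ⟨Or.inr ⟨by linarith, by linarith⟩, Or.inr ⟨by linarith, by linarith⟩⟩

end

theorem stmt9_general {V : Type*} [DecidableEq V] (G : SimpleGraph V)
    (top bot : V → ℝ)
    (hadj : ∀ u v, G.Adj u v ↔
      (top u < top v ∧ bot v < bot u) ∨ (top v < top u ∧ bot u < bot v))
    (X Y : Set V)
    (hX : ∀ u ∈ X, ∀ v ∈ X, ¬G.Adj u v) (hY : ∀ u ∈ Y, ∀ v ∈ Y, ¬G.Adj u v)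
    (P : Finset (Finset V)) (hP : IsC4Packing G P)
    (a b' c d p q r s : V)
    (haX : a ∈ X) (hb'X : b' ∈ X) (hcX : c ∈ X) (hdX : d ∈ X)
    (hpY : p ∈ Y) (hqY : q ∈ Y) (hrY : r ∈ Y) (hsY : s ∈ Y)
    (hC1 : ({a, b', r, s} : Finset V) ∈ P) (hC2 : ({c, d, p, q} : Finset V) ∈ P)
    (h1 : top a < top b') (h2 : top b' < top c) (h3 : top c < top d)
    (h4 : top p < top q) (h5 : top q < top r) (h6 : top r < top s) :
    ∃ P' : Finset (Finset V), IsC4Packing G P' ∧ P'.card = P.card ∧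
      ({a, b', p, q} : Finset V) ∈ P' ∧ ({c, d, r, s} : Finset V) ∈ P' := by
  have hab' := hX a haX b' hb'X
  have hcd := hX c hcX d hdX
  obtain ⟨har, has, hb'r, hb's⟩ := (hP.1 _ hC1).adj_cross_of_not_adj hab'
  obtain ⟨hcp, hcq, hdp, hdq⟩ := (hP.1 _ hC2).adj_cross_of_not_adj hcd
  have uncross {x₁ x₂ y₁ y₂ : V} (hx₁ : x₁ ∈ X) (hx₂ : x₂ ∈ X) (hy₁ : y₁ ∈ Y) (hy₂ : y₂ ∈ Y)
      (htx : top x₁ < top x₂) (hty : top y₁ < top y₂) :=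
    adj_of_crossing hadj htx hty (hX _ hx₁ _ hx₂) (hY _ hy₁ _ hy₂)
  obtain ⟨hap, hcr⟩ := uncross haX hcX hpY hrY (by linarith) (by linarith) har hcp
  obtain ⟨haq, hcs⟩ := uncross haX hcX hqY hsY (by linarith) (by linarith) has hcq
  obtain ⟨hb'p, -⟩ := uncross hb'X hcX hpY hrY (by linarith) (by linarith) hb'r hcp
  obtain ⟨hb'q, -⟩ := uncross hb'X hcX hqY hsY (by linarith) (by linarith) hb's hcq
  obtain ⟨-, hdr⟩ := uncross haX hdX hpY hrY (by linarith) (by linarith) har hdp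
  obtain ⟨-, hds⟩ := uncross haX hdX hqY hsY (by linarith) (by linarith) has hdq
  have hT : Disjoint ({a, b', p, q} : Finset V) {c, d, r, s} := by
    simp only [Finset.disjoint_insert_left, Finset.disjoint_singleton_left, Finset.mem_insert,
      Finset.mem_singleton]
    refine ⟨?_, ?_, ?_, ?_⟩ <;> rintro (rfl | rfl | rfl | rfl)
    -- a coincidence between the two sides would turn one of the known edges into a loop
    all_goals first | linarith | exact G.irrefl ‹_›
  have hT₁ : IsC4Square G {a, b', p, q} :=
    isC4Square_of_adj (ne_of_apply_ne top h1.ne) (ne_of_apply_ne top h4.ne) hab'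
      (hY p hpY q hqY) hap haq hb'p hb'q
  have hT₂ : IsC4Square G {c, d, r, s} :=
    isC4Square_of_adj (ne_of_apply_ne top h3.ne) (ne_of_apply_ne top h6.ne) hcd
      (hY r hrY s hsY) hcr hcs hdr hds
  refine hP.exchange hC1 hC2 hT₁ hT₂ hT ?_
  intro x
  simp only [Finset.mem_union, Finset.mem_insert, Finset.mem_singleton]
  tauto

/-- Let `G` be a bipartite permutation graph with bipartition `(X, Y)` given
by a permutation diagram `top, bot`, and let `P` be a `C4`-packing containing two squares
`{a, b', r, s}` and `{c, d, p, q}` with `a, b', c, d ∈ X`, `p, q, r, s ∈ Y`,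
`top a < top b' < top c < top d` and `top p < top q < top r < top s`. Then there is a
`C4`-packing of the same cardinality containing the squares `{a, b', p, q}` and
`{c, d, r, s}`. -/
theorem stmt9 {V : Type*} [Fintype V] [DecidableEq V] (G : SimpleGraph V)
    (top bot : V → ℝ) (htop : Function.Injective top) (hbot : Function.Injective bot)
    (hadj : ∀ u v, G.Adj u v ↔
      (top u < top v ∧ bot v < bot u) ∨ (top v < top u ∧ bot u < bot v))
    (X Y : Set V) (hdisj : Disjoint X Y) (hunion : X ∪ Y = Set.univ)
    (hX : ∀ u ∈ X, ∀ v ∈ X, ¬G.Adj u v) (hY : ∀ u ∈ Y, ∀ v ∈ Y, ¬G.Adj u v)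
    (P : Finset (Finset V)) (hP : IsC4Packing G P)
    (a b' c d p q r s : V)
    (haX : a ∈ X) (hb'X : b' ∈ X) (hcX : c ∈ X) (hdX : d ∈ X)
    (hpY : p ∈ Y) (hqY : q ∈ Y) (hrY : r ∈ Y) (hsY : s ∈ Y)
    (hC1 : ({a, b', r, s} : Finset V) ∈ P) (hC2 : ({c, d, p, q} : Finset V) ∈ P)
    (h1 : top a < top b') (h2 : top b' < top c) (h3 : top c < top d)
    (h4 : top p < top q) (h5 : top q < top r) (h6 : top r < top s) :
    ∃ P' : Finset (Finset V), IsC4Packing G P' ∧ P'.card = P.card ∧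
      ({a, b', p, q} : Finset V) ∈ P' ∧ ({c, d, r, s} : Finset V) ∈ P' :=
  stmt9_general G top bot hadj X Y hX hY P hP a b' c d p q r s haX hb'X hcX hdX hpY hqY hrY hsY hC1
    hC2 h1 h2 h3 h4 h5 h6
end
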